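/- Let n be a positive integer and r a real number with 0 < r < n. For each k ∈ ℕ let D_k be the collection of all dyadic cubes ∏_{i<n} [j_i/2^k, (j_i+1)/2^k] ⊆ ℝⁿ with j_i ∈ {0, …, 2^k−1}, and let T_k ⊆ D_k be a finite subcollection with |T_k| ≤ 2^{k r/2} (as real numbers). Then the set N_T = ⋂_{k∈ℕ} ⋃_{Q ∈ T_k} Q has r-dimensional Hausdorff measure zero. -/

import Mathlib

open MeasureTheory Set Filter Metric
open scoped ENNReal MeasureTheory Topology

noncomputable section

/-- The collection of dyadic cubes `∏_{i<n} [jᵢ/2^k, (jᵢ+1)/2^k]` with `jᵢ ∈ {0,…,2^k−1}`. -/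
def dyadicCubes (n k : ℕ) : Set (Set (EuclideanSpace ℝ (Fin n))) :=
  { Q | ∃ j : Fin n → ℕ, (∀ i, j i < 2 ^ k) ∧
      Q = {x | ∀ i, x i ∈ Set.Icc ((j i : ℝ) / 2 ^ k) (((j i : ℝ) + 1) / 2 ^ k)} }

/-!
At generation `k` the cubes of `T k` cover `N_T` and have diameter at most `√n 2⁻ᵏ`, so the
`r`-dimensional covering sum is at most `2^(kr/2) (√n 2⁻ᵏ)^r = n^(r/2) 2^(-kr/2)`, which tends
to `0`, as does the mesh `√n 2⁻ᵏ`. Hence `H^r(N_T) = 0`.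
-/

theorem hausdorffMeasure_eq_zero_of_finite_covers {X : Type*} [EMetricSpace X]
    [MeasurableSpace X] [BorelSpace X] {d : ℝ} (hd : 0 ≤ d) {s : Set X}
    {T : ℕ → Set (Set X)} (hTfin : ∀ k, (T k).Finite) (hsT : ∀ k, s ⊆ ⋃₀ T k)
    {δ : ℕ → ℝ≥0∞} (hδ : Tendsto δ atTop (𝓝 0)) (hdiam : ∀ k, ∀ Q ∈ T k, ediam Q ≤ δ k)
    (hsum : Tendsto (fun k => ((T k).ncard : ℝ≥0∞) * δ k ^ d) atTop (𝓝 0)) :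
    μH[d] s = 0 := by
  have := fun k => (hTfin k).fintype
  have hcover : ∀ k, s ⊆ ⋃ Q : T k, (Q : Set X) := fun k => by
    rw [← sUnion_eq_iUnion]; exact hsT k
  have hsum_le : ∀ k, ∑ Q : T k, ediam (Q : Set X) ^ d ≤ (T k).ncard * δ k ^ d := fun k =>
    calc ∑ Q : T k, ediam (Q : Set X) ^ d ≤ ∑ _Q : T k, δ k ^ d :=
          Finset.sum_le_sum fun Q _ => ENNReal.rpow_le_rpow (hdiam k Q Q.2) hd
      _ = (T k).ncard * δ k ^ d := by
          rw [Finset.sum_const, Finset.card_univ, nsmul_eq_mul, ← Nat.card_eq_fintype_card,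
            Nat.card_coe_set_eq]
  refine le_antisymm ?_ zero_le
  calc μH[d] s ≤ liminf (fun k => ∑ Q : T k, ediam (Q : Set X) ^ d) atTop :=
        Measure.hausdorffMeasure_le_liminf_sum d s δ hδ (fun k (Q : T k) => (Q : Set X))
          (.of_forall fun k Q => hdiam k Q Q.2) (.of_forall hcover)
    _ ≤ liminf (fun k => ((T k).ncard : ℝ≥0∞) * δ k ^ d) atTop :=
        liminf_le_liminf (.of_forall hsum_le)
    _ = 0 := hsum.liminf_eq

theorem EuclideanSpace.dist_le_sqrt_card_mul {ι : Type*} [Fintype ι]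
    {x y : EuclideanSpace ℝ ι} {h : ℝ} (hh : 0 ≤ h) (hxy : ∀ i, dist (x i) (y i) ≤ h) :
    dist x y ≤ √(Fintype.card ι) * h :=
  calc dist x y = √(∑ i, dist (x i) (y i) ^ 2) := EuclideanSpace.dist_eq x y
    _ ≤ √(∑ _i : ι, h ^ 2) :=
        Real.sqrt_le_sqrt <| Finset.sum_le_sum fun i _ => pow_le_pow_left₀ dist_nonneg (hxy i) 2
    _ = √(Fintype.card ι) * h := by
        rw [Finset.sum_const, Finset.card_univ, nsmul_eq_mul, Real.sqrt_mul (by positivity),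
          Real.sqrt_sq hh]

theorem ediam_le_of_mem_dyadicCubes {n k : ℕ} {Q : Set (EuclideanSpace ℝ (Fin n))}
    (hQ : Q ∈ dyadicCubes n k) : ediam Q ≤ ENNReal.ofReal (√n / 2 ^ k) := by
  obtain ⟨j, -, rfl⟩ := hQ
  refine ediam_le fun x hx y hy => ?_
  rw [edist_dist]
  refine ENNReal.ofReal_le_ofReal ?_
  calc dist x y ≤ √(Fintype.card (Fin n)) * (1 / 2 ^ k) :=
        EuclideanSpace.dist_le_sqrt_card_mul (by positivity) fun i =>
          (Real.dist_le_of_mem_Icc (hx i) (hy i)).trans_eq (by ring)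
    _ = √n / 2 ^ k := by rw [Fintype.card_fin, mul_one_div]

theorem tendsto_ncard_mul_ofReal_rpow_nhds_zero {α : Type*} {T : ℕ → Set α} {c r : ℝ}
    (hc : 0 ≤ c) (hr : 0 < r) (hTcard : ∀ k : ℕ, ((T k).ncard : ℝ) ≤ (2 : ℝ) ^ ((k : ℝ) * r / 2)) :
    Tendsto (fun k => ((T k).ncard : ℝ≥0∞) * ENNReal.ofReal (c / 2 ^ k) ^ r) atTop (𝓝 0) := by
  set q : ℝ := (2 : ℝ) ^ (-(r / 2))
  have hq : q < 1 := Real.rpow_lt_one_of_one_lt_of_neg one_lt_two (by linarith)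
  have hgeom : Tendsto (fun k : ℕ => ENNReal.ofReal (c ^ r * q ^ k)) atTop (𝓝 0) := by
    simpa using ENNReal.tendsto_ofReal
      ((tendsto_pow_atTop_nhds_zero_of_lt_one (by positivity) hq).const_mul (c ^ r))
  have hbound : ∀ k : ℕ, (2 : ℝ) ^ ((k : ℝ) * r / 2) * (c / 2 ^ k) ^ r = c ^ r * q ^ k := by
    intro k
    rw [Real.div_rpow hc (by positivity), ← Real.rpow_natCast, ← Real.rpow_natCast,
      ← Real.rpow_mul zero_le_two, ← Real.rpow_mul zero_le_two, mul_div_left_comm,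
      ← Real.rpow_sub zero_lt_two]
    ring_nf
  refine tendsto_of_tendsto_of_tendsto_of_le_of_le tendsto_const_nhds hgeom (fun _ => zero_le)
    fun k => ?_
  rw [← ENNReal.ofReal_natCast, ENNReal.ofReal_rpow_of_nonneg (by positivity) hr.le,
    ← ENNReal.ofReal_mul (by positivity), ← hbound]
  gcongr
  exact hTcard k

theorem stmt14_general (n : ℕ) (r : ℝ) (hr0 : 0 < r)
    (T : ℕ → Set (Set (EuclideanSpace ℝ (Fin n))))
    (hT : ∀ k, T k ⊆ dyadicCubes n k)
    (hTfin : ∀ k, (T k).Finite)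
    (hTcard : ∀ k : ℕ, ((T k).ncard : ℝ) ≤ (2 : ℝ) ^ ((k : ℝ) * r / 2)) :
    μH[r] (⋂ k : ℕ, ⋃₀ T k) = 0 := by
  have hside : Tendsto (fun k : ℕ => ENNReal.ofReal (√n / 2 ^ k)) atTop (𝓝 0) := by
    simpa using ENNReal.tendsto_ofReal
      (tendsto_const_nhds.div_atTop (tendsto_pow_atTop_atTop_of_one_lt one_lt_two))
  exact hausdorffMeasure_eq_zero_of_finite_covers hr0.le hTfin (iInter_subset _) hside
    (fun k _ hQ => ediam_le_of_mem_dyadicCubes (hT k hQ))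
    (tendsto_ncard_mul_ofReal_rpow_nhds_zero (Real.sqrt_nonneg n) hr0 hTcard)

/-- If `T_k` is a family of at most `2^{k r / 2}` dyadic cubes of generation `k`, then
`N_T = ⋂_k ⋃ T_k` has `r`-dimensional Hausdorff measure zero. -/
theorem stmt14 (n : ℕ) (r : ℝ) (hn : 1 ≤ n) (hr0 : 0 < r) (hrn : r < n)
    (T : ℕ → Set (Set (EuclideanSpace ℝ (Fin n))))
    (hT : ∀ k, T k ⊆ dyadicCubes n k)
    (hTfin : ∀ k, (T k).Finite)
    (hTcard : ∀ k : ℕ, ((T k).ncard : ℝ) ≤ (2 : ℝ) ^ ((k : ℝ) * r / 2)) :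
    μH[r] (⋂ k : ℕ, ⋃₀ T k) = 0 :=
  stmt14_general n r hr0 T hT hTfin hTcard
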